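/- For every integer n ≥ 3, the graph H_{4n} contains no induced subgraph isomorphic to P_1 + 2P_2; that is, H_{4n} is (P_1 + 2P_2)-free. -/

import Mathlib

/-- `P₁ + 2P₂`: one isolated vertex `0` and two disjoint edges `1 – 2` and `3 – 4`. -/
def P1_2P2 : SimpleGraph (Fin 5) where
  Adj u v := (u = 1 ∧ v = 2) ∨ (u = 2 ∧ v = 1) ∨
             (u = 3 ∧ v = 4) ∨ (u = 4 ∧ v = 3)
  symm := by constructor; intro u v; revert u v; decide
  loopless := by constructor; intro u; revert u; decide

/-- The residue modulo `4` of an element of `ZMod (4 * n)`. -/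
def res4 (n : ℕ) (u : ZMod (4 * n)) : ZMod 4 :=
  ZMod.castHom (dvd_mul_right 4 n) (ZMod 4) u

/-- `u` lies in the set `X`: its residue modulo `4` is `0` or `1`. -/
def memX (n : ℕ) (u : ZMod (4 * n)) : Prop := res4 n u = 0 ∨ res4 n u = 1

/-- `u` lies in the set `Y`: its residue modulo `4` is `2` or `3`. -/
def memY (n : ℕ) (u : ZMod (4 * n)) : Prop := res4 n u = 2 ∨ res4 n u = 3

/-- `u` and `v` are consecutive on the cycle `C_{4n}`. -/
def cycAdj (n : ℕ) (u v : ZMod (4 * n)) : Prop := v = u + 1 ∨ u = v + 1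

/-- The graph `H_{4n}` on vertex set `ZMod (4n)`, obtained from the cycle `C_{4n}`
by complementing the subgraph induced by `X = {u : u ≡ 0 or 1 (mod 4)}` and
complementing the subgraph induced by `Y = {u : u ≡ 2 or 3 (mod 4)}`: two distinct
vertices `u`, `v` are adjacent iff either both lie in `X` or both in `Y` and they are
not cycle-adjacent, or one lies in `X` and the other in `Y` and they are
cycle-adjacent. -/
def H4 (n : ℕ) : SimpleGraph (ZMod (4 * n)) where
  Adj u v := u ≠ v ∧
    ((((memX n u ∧ memX n v) ∨ (memY n u ∧ memY n v)) ∧ ¬cycAdj n u v) ∨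
     (((memX n u ∧ memY n v) ∨ (memY n u ∧ memX n v)) ∧ cycAdj n u v))
  symm := by
    constructor
    rintro u v ⟨h, h2⟩
    have hc : cycAdj n u v ↔ cycAdj n v u := by unfold cycAdj; tauto
    exact ⟨h.symm, by tauto⟩
  loopless := by constructor; intro u h; exact h.1 rfl


instance : DecidableRel P1_2P2.Adj := fun u v =>
  inferInstanceAs (Decidable ((u = 1 ∧ v = 2) ∨ (u = 2 ∧ v = 1) ∨ (u = 3 ∧ v = 4) ∨ (u = 4 ∧ v = 3)))

lemma res4_add_one (n : ℕ) (u : ZMod (4 * n)) : res4 n (u + 1) = res4 n u + 1 := by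
  simp [res4, map_add, map_one]

lemma nonadj_cyc (n : ℕ) {u v : ZMod (4 * n)} (hne : u ≠ v) (hna : ¬ (H4 n).Adj u v)
    (hs : (memX n u ∧ memX n v) ∨ (memY n u ∧ memY n v)) : cycAdj n u v := by
  by_contra hc
  exact hna ⟨hne, Or.inl ⟨hs, hc⟩⟩

lemma mateX (n : ℕ) {u v : ZMod (4 * n)} (hu : memX n u) (hv : memX n v)
    (hne : u ≠ v) (hna : ¬ (H4 n).Adj u v) :
    v = (if res4 n u = 0 then u + 1 else u - 1) := by
  rcases nonadj_cyc n hne hna (Or.inl ⟨hu, hv⟩) with h | h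
  · subst h
    rcases hu with h0 | h1
    · rw [if_pos h0]
    · exfalso
      rcases hv with h' | h' <;> rw [res4_add_one, h1] at h' <;> exact absurd h' (by decide)
  · subst h
    rcases hv with h0 | h1
    · have hne0 : res4 n (v + 1) ≠ 0 := by rw [res4_add_one, h0]; decide
      rw [if_neg hne0]; ring
    · exfalso
      rcases hu with h' | h' <;> rw [res4_add_one, h1] at h' <;> exact absurd h' (by decide)

lemma mateY (n : ℕ) {u v : ZMod (4 * n)} (hu : memY n u) (hv : memY n v)
    (hne : u ≠ v) (hna : ¬ (H4 n).Adj u v) :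
    v = (if res4 n u = 2 then u + 1 else u - 1) := by
  rcases nonadj_cyc n hne hna (Or.inr ⟨hu, hv⟩) with h | h
  · subst h
    rcases hu with h0 | h1
    · rw [if_pos h0]
    · exfalso
      rcases hv with h' | h' <;> rw [res4_add_one, h1] at h' <;> exact absurd h' (by decide)
  · subst h
    rcases hv with h0 | h1
    · have hne0 : res4 n (v + 1) ≠ 2 := by rw [res4_add_one, h0]; decide
      rw [if_neg hne0]; ring
    · exfalso
      rcases hu with h' | h' <;> rw [res4_add_one, h1] at h' <;> exact absurd h' (by decide)

lemma keyX (n : ℕ) (u v w : ZMod (4 * n)) (hu : memX n u) (hv : memX n v) (hw : memX n w)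
    (huv : u ≠ v) (huw : u ≠ w) (hvw : v ≠ w)
    (nuv : ¬ (H4 n).Adj u v) (nuw : ¬ (H4 n).Adj u w) : False :=
  hvw ((mateX n hu hv huv nuv).trans (mateX n hu hw huw nuw).symm)

lemma keyY (n : ℕ) (u v w : ZMod (4 * n)) (hu : memY n u) (hv : memY n v) (hw : memY n w)
    (huv : u ≠ v) (huw : u ≠ w) (hvw : v ≠ w)
    (nuv : ¬ (H4 n).Adj u v) (nuw : ¬ (H4 n).Adj u w) : False :=
  hvw ((mateY n hu hv huv nuv).trans (mateY n hu hw huw nuw).symm)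

/-- For every `n ≥ 3`, the graph `H_{4n}` is `(P₁ + 2P₂)`-free. -/
theorem H4_P1_2P2_free (n : ℕ) (hn : 3 ≤ n) : IsEmpty (P1_2P2 ↪g H4 n) := by
  constructor
  intro f
  have hne : ∀ i j : Fin 5, i ≠ j → f i ≠ f j := fun i j h hf => h (f.injective hf)
  have hna : ∀ i j : Fin 5, ¬ P1_2P2.Adj i j → ¬ (H4 n).Adj (f i) (f j) :=
    fun i j h ha => h (f.map_rel_iff.mp ha)
  have hor : ∀ u : ZMod (4 * n), memX n u ∨ memY n u := by
    intro u
    have h : ∀ r : ZMod 4, (r = 0 ∨ r = 1) ∨ (r = 2 ∨ r = 3) := by decide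
    exact h (res4 n u)
  rcases hor (f 0) with h0 | h0 <;> rcases hor (f 1) with h1 | h1 <;>
    rcases hor (f 2) with h2 | h2 <;> rcases hor (f 3) with h3 | h3 <;>
    rcases hor (f 4) with h4 | h4 <;>
  first
  | exact keyX n _ _ _ h0 h1 h2 (hne 0 1 (by decide)) (hne 0 2 (by decide)) (hne 1 2 (by decide)) (hna 0 1 (by decide)) (hna 0 2 (by decide))
  | exact keyX n _ _ _ h0 h1 h3 (hne 0 1 (by decide)) (hne 0 3 (by decide)) (hne 1 3 (by decide)) (hna 0 1 (by decide)) (hna 0 3 (by decide))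
  | exact keyX n _ _ _ h0 h1 h4 (hne 0 1 (by decide)) (hne 0 4 (by decide)) (hne 1 4 (by decide)) (hna 0 1 (by decide)) (hna 0 4 (by decide))
  | exact keyX n _ _ _ h0 h2 h3 (hne 0 2 (by decide)) (hne 0 3 (by decide)) (hne 2 3 (by decide)) (hna 0 2 (by decide)) (hna 0 3 (by decide))
  | exact keyX n _ _ _ h0 h2 h4 (hne 0 2 (by decide)) (hne 0 4 (by decide)) (hne 2 4 (by decide)) (hna 0 2 (by decide)) (hna 0 4 (by decide))
  | exact keyX n _ _ _ h0 h3 h4 (hne 0 3 (by decide)) (hne 0 4 (by decide)) (hne 3 4 (by decide)) (hna 0 3 (by decide)) (hna 0 4 (by decide))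
  | exact keyX n _ _ _ h3 h1 h2 (hne 3 1 (by decide)) (hne 3 2 (by decide)) (hne 1 2 (by decide)) (hna 3 1 (by decide)) (hna 3 2 (by decide))
  | exact keyX n _ _ _ h4 h1 h2 (hne 4 1 (by decide)) (hne 4 2 (by decide)) (hne 1 2 (by decide)) (hna 4 1 (by decide)) (hna 4 2 (by decide))
  | exact keyX n _ _ _ h1 h3 h4 (hne 1 3 (by decide)) (hne 1 4 (by decide)) (hne 3 4 (by decide)) (hna 1 3 (by decide)) (hna 1 4 (by decide))
  | exact keyX n _ _ _ h2 h3 h4 (hne 2 3 (by decide)) (hne 2 4 (by decide)) (hne 3 4 (by decide)) (hna 2 3 (by decide)) (hna 2 4 (by decide))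
  | exact keyY n _ _ _ h0 h1 h2 (hne 0 1 (by decide)) (hne 0 2 (by decide)) (hne 1 2 (by decide)) (hna 0 1 (by decide)) (hna 0 2 (by decide))
  | exact keyY n _ _ _ h0 h1 h3 (hne 0 1 (by decide)) (hne 0 3 (by decide)) (hne 1 3 (by decide)) (hna 0 1 (by decide)) (hna 0 3 (by decide))
  | exact keyY n _ _ _ h0 h1 h4 (hne 0 1 (by decide)) (hne 0 4 (by decide)) (hne 1 4 (by decide)) (hna 0 1 (by decide)) (hna 0 4 (by decide))
  | exact keyY n _ _ _ h0 h2 h3 (hne 0 2 (by decide)) (hne 0 3 (by decide)) (hne 2 3 (by decide)) (hna 0 2 (by decide)) (hna 0 3 (by decide))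
  | exact keyY n _ _ _ h0 h2 h4 (hne 0 2 (by decide)) (hne 0 4 (by decide)) (hne 2 4 (by decide)) (hna 0 2 (by decide)) (hna 0 4 (by decide))
  | exact keyY n _ _ _ h0 h3 h4 (hne 0 3 (by decide)) (hne 0 4 (by decide)) (hne 3 4 (by decide)) (hna 0 3 (by decide)) (hna 0 4 (by decide))
  | exact keyY n _ _ _ h3 h1 h2 (hne 3 1 (by decide)) (hne 3 2 (by decide)) (hne 1 2 (by decide)) (hna 3 1 (by decide)) (hna 3 2 (by decide))
  | exact keyY n _ _ _ h4 h1 h2 (hne 4 1 (by decide)) (hne 4 2 (by decide)) (hne 1 2 (by decide)) (hna 4 1 (by decide)) (hna 4 2 (by decide))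
  | exact keyY n _ _ _ h1 h3 h4 (hne 1 3 (by decide)) (hne 1 4 (by decide)) (hne 3 4 (by decide)) (hna 1 3 (by decide)) (hna 1 4 (by decide))
  | exact keyY n _ _ _ h2 h3 h4 (hne 2 3 (by decide)) (hne 2 4 (by decide)) (hne 3 4 (by decide)) (hna 2 3 (by decide)) (hna 2 4 (by decide))
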